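/- Let A be a unital C*-algebra with 1 ≠ 0, let d ≥ 0 be an integer, let ε > 0, and let f_1^0, …, f_1^d and f_2^0, …, f_2^d be positive contractions in A such that for every l ∈ {0,…,d}: ‖f_1^l · f_2^l‖ < ε and ‖f_1^l − f_2^l‖ < ε, and moreover ‖ ∑_{l=0}^{d} (f_1^l + f_2^l) − 1 ‖ < ε. Then 1 < ε + 2(d+1)·√(2ε). -/
import Mathlib


/-- Let `A` be a unital C*-algebra with `1 ≠ 0`, let `d ≥ 0`, `ε > 0`, and
let `f₁ 0, …, f₁ d` and `f₂ 0, …, f₂ d` be positive contractions in `A` such that for every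
`l ∈ {0,…,d}`: `‖f₁ l · f₂ l‖ < ε` and `‖f₁ l − f₂ l‖ < ε`, and moreover
`‖ ∑_{l=0}^{d} (f₁ l + f₂ l) − 1 ‖ < ε`.  Then `1 < ε + 2(d+1)·√(2ε)`. -/
theorem one_lt_of_rokhlin_periodicity {A : Type*} [CStarAlgebra A]
    [PartialOrder A] [StarOrderedRing A] (hA : (1 : A) ≠ 0)
    (d : ℕ) (ε : ℝ) (hε : 0 < ε) (f₁ f₂ : ℕ → A)
    (hpos₁ : ∀ l ≤ d, 0 ≤ f₁ l) (hcon₁ : ∀ l ≤ d, ‖f₁ l‖ ≤ 1)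
    (hpos₂ : ∀ l ≤ d, 0 ≤ f₂ l) (hcon₂ : ∀ l ≤ d, ‖f₂ l‖ ≤ 1)
    (horth : ∀ l ≤ d, ‖f₁ l * f₂ l‖ < ε)
    (hclose : ∀ l ≤ d, ‖f₁ l - f₂ l‖ < ε)
    (hsum : ‖(∑ l ∈ Finset.range (d + 1), (f₁ l + f₂ l)) - 1‖ < ε) :
    (1 : ℝ) < ε + 2 * ((d : ℝ) + 1) * Real.sqrt (2 * ε) := by
  haveI : Nontrivial A := ⟨⟨1, 0, hA⟩⟩
  have key : ∀ l ≤ d, ‖f₁ l + f₂ l‖ ≤ 2 * Real.sqrt (2 * ε) := by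
    intro l hl
    have sa1 : IsSelfAdjoint (f₁ l) := .of_nonneg (hpos₁ l hl)
    have sa2 : IsSelfAdjoint (f₂ l) := .of_nonneg (hpos₂ l hl)
    have hrev : ‖f₂ l * f₁ l‖ = ‖f₁ l * f₂ l‖ := by
      rw [← norm_star, star_mul, sa1.star_eq, sa2.star_eq]
    have hc1 : ‖f₁ l‖ < Real.sqrt (2 * ε) := by
      rw [← Real.sqrt_sq (norm_nonneg (f₁ l))]
      apply Real.sqrt_lt_sqrt (sq_nonneg _)
      have hsq : ‖f₁ l‖ ^ 2 = ‖f₁ l * f₁ l‖ := by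
        have := CStarRing.norm_star_mul_self (x := f₁ l)
        rw [sa1.star_eq] at this
        rw [this, sq]
      calc ‖f₁ l‖ ^ 2 = ‖f₁ l * (f₁ l - f₂ l) + f₁ l * f₂ l‖ := by
            rw [hsq]; congr 1; noncomm_ring
          _ ≤ ‖f₁ l * (f₁ l - f₂ l)‖ + ‖f₁ l * f₂ l‖ := norm_add_le _ _
          _ ≤ ‖f₁ l‖ * ‖f₁ l - f₂ l‖ + ‖f₁ l * f₂ l‖ := by
            gcongr; exact norm_mul_le _ _
          _ < 1 * ε + ε := by
            have := hclose l hl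
            have := horth l hl
            have h1 : ‖f₁ l‖ * ‖f₁ l - f₂ l‖ ≤ 1 * ε := by
              apply mul_le_mul (hcon₁ l hl) (hclose l hl).le (norm_nonneg _) zero_le_one
            linarith
          _ = 2 * ε := by ring
    have hc2 : ‖f₂ l‖ < Real.sqrt (2 * ε) := by
      rw [← Real.sqrt_sq (norm_nonneg (f₂ l))]
      apply Real.sqrt_lt_sqrt (sq_nonneg _)
      have hsq : ‖f₂ l‖ ^ 2 = ‖f₂ l * f₂ l‖ := by
        have := CStarRing.norm_star_mul_self (x := f₂ l)
        rw [sa2.star_eq] at this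
        rw [this, sq]
      calc ‖f₂ l‖ ^ 2 = ‖f₂ l * (f₂ l - f₁ l) + f₂ l * f₁ l‖ := by
            rw [hsq]; congr 1; noncomm_ring
          _ ≤ ‖f₂ l * (f₂ l - f₁ l)‖ + ‖f₂ l * f₁ l‖ := norm_add_le _ _
          _ ≤ ‖f₂ l‖ * ‖f₂ l - f₁ l‖ + ‖f₁ l * f₂ l‖ := by
            rw [hrev]; gcongr; exact norm_mul_le _ _
          _ < 1 * ε + ε := by
            have := horth l hl
            have h1 : ‖f₂ l‖ * ‖f₂ l - f₁ l‖ ≤ 1 * ε := by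
              apply mul_le_mul (hcon₂ l hl) ?_ (norm_nonneg _) zero_le_one
              rw [norm_sub_rev]; exact (hclose l hl).le
            linarith
          _ = 2 * ε := by ring
    calc ‖f₁ l + f₂ l‖ ≤ ‖f₁ l‖ + ‖f₂ l‖ := norm_add_le _ _
      _ ≤ 2 * Real.sqrt (2 * ε) := by linarith
  set S := ∑ l ∈ Finset.range (d + 1), (f₁ l + f₂ l) with hS
  have hSnorm : ‖S‖ ≤ ((d : ℝ) + 1) * (2 * Real.sqrt (2 * ε)) := by
    calc ‖S‖ ≤ ∑ l ∈ Finset.range (d + 1), ‖f₁ l + f₂ l‖ := norm_sum_le _ _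
      _ ≤ ∑ l ∈ Finset.range (d + 1), 2 * Real.sqrt (2 * ε) := by
          apply Finset.sum_le_sum
          intro l hl
          exact key l (Nat.lt_succ_iff.mp (Finset.mem_range.mp hl))
      _ = ((d : ℝ) + 1) * (2 * Real.sqrt (2 * ε)) := by
          rw [Finset.sum_const, Finset.card_range]; push_cast; ring
  have h1 : (1 : ℝ) = ‖(1 : A)‖ := norm_one.symm
  have : ‖(1 : A)‖ ≤ ‖S - 1‖ + ‖S‖ := by
    calc ‖(1 : A)‖ = ‖S - (S - 1)‖ := by rw [sub_sub_cancel]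
      _ ≤ ‖S‖ + ‖S - 1‖ := norm_sub_le _ _
      _ = ‖S - 1‖ + ‖S‖ := by ring
  calc (1 : ℝ) = ‖(1 : A)‖ := h1
    _ ≤ ‖S - 1‖ + ‖S‖ := this
    _ < ε + ((d : ℝ) + 1) * (2 * Real.sqrt (2 * ε)) := by
        exact add_lt_add_of_lt_of_le hsum hSnorm
    _ = ε + 2 * ((d : ℝ) + 1) * Real.sqrt (2 * ε) := by ring
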